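/- Let H be a real separable Hilbert space, let C : H → H be a continuous linear map, let (Ω, F, μ) be a probability space, let θ > 0, let g ∈ H, and let y, δ : Ω → H be bounded strongly measurable functions. Define the tilted weight ω(σ) := exp(θ·‖C(y(σ) − g)‖_H²) / ∫_Ω exp(θ·‖C(y(τ) − g)‖_H²) dμ(τ) and set 𝒞(σ) := C*C(y(σ) − g). Then the real function φ(t) := (1/θ)·log(∫_Ω exp(θ·‖C(y(σ) + t·δ(σ) − g)‖_H²) dμ(σ)) is twice differentiable at t = 0 and its second derivative equals φ''(0) = 2·∫_Ω ω(σ)·⟨C*C δ(σ), δ(σ)⟩_H dμ(σ) + 4θ·( ∫_Ω ω(σ)·⟨𝒞(σ), δ(σ)⟩_H² dμ(σ) − ( ∫_Ω ω(σ)·⟨𝒞(σ), δ(σ)⟩_H dμ(σ) )² ). -/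

import Mathlib

/-!
Write `Z(t) = ∫ exp (θ f(t, σ)) dμ(σ)` for a cost `f` that is twice differentiable in `t` with
bounded derivatives, so that differentiation under the integral sign is legitimate. Then
`(log Z)' = θ · E_t[∂ₜf]`, where `E_t` is the expectation under `μ` tilted by `exp (θ f(t, ·))`,
and differentiating once more gives the cumulant formula
`(1/θ) (log Z)'' = E[∂ₜ²f] + θ (E[(∂ₜf)²] - E[∂ₜf]²)`.
For the tracking cost `f(t, σ) = ‖C (y σ + t δ σ - g)‖²` one has `∂ₜf = 2 ⟪C*C (y + tδ - g), δ⟫`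
and `∂ₜ²f = 2 ⟪C*C δ, δ⟫`.
-/

open MeasureTheory Filter Topology
open scoped RealInnerProductSpace

noncomputable def entropicRisk {Ω : Type*} [MeasurableSpace Ω] (μ : Measure Ω) (θ : ℝ)
    (X : Ω → ℝ) : ℝ :=
  1 / θ * Real.log (∫ σ, Real.exp (θ * X σ) ∂μ)

section TiltedCalculus

variable {Ω : Type*} [MeasurableSpace Ω] {μ : Measure Ω}

lemma integral_tilted_eq_div (h g : Ω → ℝ) :
    ∫ σ, g σ ∂μ.tilted h = (∫ σ, g σ * Real.exp (h σ) ∂μ) / ∫ σ, Real.exp (h σ) ∂μ := by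
  rw [integral_tilted, ← integral_div]
  congr with σ
  rw [smul_eq_mul]
  ring

lemma abs_mul_exp_mul_le {θ a x M N : ℝ} (ha : |a| ≤ N) (hx : |x| ≤ M) :
    |a * Real.exp (θ * x)| ≤ N * Real.exp (|θ| * M) := by
  rw [abs_mul, Real.abs_exp]
  refine mul_le_mul ha (Real.exp_le_exp.2 ?_) (Real.exp_pos _).le ((abs_nonneg a).trans ha)
  calc θ * x ≤ |θ * x| := le_abs_self _
    _ = |θ| * |x| := abs_mul θ x
    _ ≤ |θ| * M := mul_le_mul_of_nonneg_left hx (abs_nonneg θ)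

variable [IsFiniteMeasure μ] {θ M t₀ : ℝ}

lemma integrable_mul_exp_mul {a x : Ω → ℝ} {N : ℝ} (ha_meas : AEStronglyMeasurable a μ)
    (hx_meas : AEStronglyMeasurable x μ) (ha : ∀ σ, |a σ| ≤ N) (hx : ∀ σ, |x σ| ≤ M) :
    Integrable (fun σ => a σ * Real.exp (θ * x σ)) μ :=
  .of_bound (ha_meas.mul (Real.continuous_exp.comp_aestronglyMeasurable
    (hx_meas.const_mul θ))) _ (ae_of_all _ fun σ => abs_mul_exp_mul_le (ha σ) (hx σ))

lemma integrable_exp_mul {x : Ω → ℝ} (hx_meas : AEStronglyMeasurable x μ)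
    (hx : ∀ σ, |x σ| ≤ M) : Integrable (fun σ => Real.exp (θ * x σ)) μ := by
  simpa using integrable_mul_exp_mul (aestronglyMeasurable_const (b := (1 : ℝ))) hx_meas
    (fun _ => abs_one.le) hx

lemma hasDerivAt_integral_of_abs_deriv_le {F F' : ℝ → Ω → ℝ}
    (hF_meas : ∀ᶠ t in 𝓝 t₀, AEStronglyMeasurable (F t) μ) (hF_int : Integrable (F t₀) μ)
    (hF'_meas : AEStronglyMeasurable (F' t₀) μ)
    (hF' : ∀ᶠ t in 𝓝 t₀, ∀ σ, HasDerivAt (F · σ) (F' t σ) t ∧ |F' t σ| ≤ M) :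
    HasDerivAt (fun t => ∫ σ, F t σ ∂μ) (∫ σ, F' t₀ σ ∂μ) t₀ :=
  (hasDerivAt_integral_of_dominated_loc_of_deriv_le hF' hF_meas hF_int hF'_meas
    (ae_of_all _ fun σ _ ht => (ht σ).2) (integrable_const M)
    (ae_of_all _ fun σ _ ht => (ht σ).1)).2

variable {f f' f'' : ℝ → Ω → ℝ}

lemma hasDerivAt_integral_exp_mul
    (hf_meas : ∀ᶠ t in 𝓝 t₀, AEStronglyMeasurable (f t) μ)
    (hf'_meas : AEStronglyMeasurable (f' t₀) μ)
    (hf : ∀ᶠ t in 𝓝 t₀, ∀ σ, HasDerivAt (f · σ) (f' t σ) t ∧ |f t σ| ≤ M ∧ |f' t σ| ≤ M) :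
    HasDerivAt (fun t => ∫ σ, Real.exp (θ * f t σ) ∂μ)
      (θ * ∫ σ, f' t₀ σ * Real.exp (θ * f t₀ σ) ∂μ) t₀ := by
  rw [← integral_const_mul]
  have hf₀ := hf.self_of_nhds
  have h_int := integrable_exp_mul (θ := θ) hf_meas.self_of_nhds fun σ => (hf₀ σ).2.1
  refine hasDerivAt_integral_of_abs_deriv_le (M := |θ| * (M * Real.exp (|θ| * M)))
    (F' := fun t σ => θ * (f' t σ * Real.exp (θ * f t σ)))
    (hf_meas.mono fun t ht => Real.continuous_exp.comp_aestronglyMeasurable (ht.const_mul θ))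
    h_int ((hf'_meas.mul (Real.continuous_exp.comp_aestronglyMeasurable
      (hf_meas.self_of_nhds.const_mul θ))).const_mul θ) (hf.mono fun t ht σ => ⟨?_, ?_⟩)
  · exact ((ht σ).1.const_mul θ).exp.congr_deriv (by ring)
  · rw [abs_mul]
    exact mul_le_mul_of_nonneg_left (abs_mul_exp_mul_le (ht σ).2.2 (ht σ).2.1) (abs_nonneg θ)

lemma hasDerivAt_integral_mul_exp_mul
    (hf_meas : ∀ᶠ t in 𝓝 t₀, AEStronglyMeasurable (f t) μ)
    (hf'_meas : ∀ᶠ t in 𝓝 t₀, AEStronglyMeasurable (f' t) μ)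
    (hf''_meas : AEStronglyMeasurable (f'' t₀) μ)
    (hf : ∀ᶠ t in 𝓝 t₀, ∀ σ, HasDerivAt (f · σ) (f' t σ) t ∧ |f t σ| ≤ M ∧ |f' t σ| ≤ M)
    (hf' : ∀ᶠ t in 𝓝 t₀, ∀ σ, HasDerivAt (f' · σ) (f'' t σ) t ∧ |f'' t σ| ≤ M) :
    HasDerivAt (fun t => ∫ σ, f' t σ * Real.exp (θ * f t σ) ∂μ)
      ((∫ σ, f'' t₀ σ * Real.exp (θ * f t₀ σ) ∂μ) +
        θ * ∫ σ, f' t₀ σ ^ 2 * Real.exp (θ * f t₀ σ) ∂μ) t₀ := by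
  have hf_meas₀ := hf_meas.self_of_nhds
  have hf₀ := hf.self_of_nhds
  have h_int'' := integrable_mul_exp_mul (θ := θ) hf''_meas hf_meas₀
    (fun σ => (hf'.self_of_nhds σ).2) fun σ => (hf₀ σ).2.1
  have h_int' : Integrable (fun σ => f' t₀ σ ^ 2 * Real.exp (θ * f t₀ σ)) μ :=
    integrable_mul_exp_mul (hf'_meas.self_of_nhds.pow 2) hf_meas₀
      (fun σ => (abs_pow _ 2).trans_le (pow_le_pow_left₀ (abs_nonneg _) (hf₀ σ).2.2 2))
      fun σ => (hf₀ σ).2.1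
  rw [← integral_const_mul, ← integral_add h_int'' (h_int'.const_mul θ)]
  refine hasDerivAt_integral_of_abs_deriv_le
    (M := M * Real.exp (|θ| * M) + |θ| * (M ^ 2 * Real.exp (|θ| * M)))
    (F' := fun t σ => f'' t σ * Real.exp (θ * f t σ) + θ * (f' t σ ^ 2 * Real.exp (θ * f t σ)))
    ((hf_meas.and hf'_meas).mono fun t ht => ht.2.mul
      (Real.continuous_exp.comp_aestronglyMeasurable (ht.1.const_mul θ)))
    (integrable_mul_exp_mul hf'_meas.self_of_nhds hf_meas₀ (fun σ => (hf₀ σ).2.2)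
      fun σ => (hf₀ σ).2.1)
    (h_int''.add (h_int'.const_mul θ)).aestronglyMeasurable
    ((hf.and hf').mono fun t ht σ => ⟨?_, ?_⟩)
  · exact ((ht.2 σ).1.mul ((ht.1 σ).1.const_mul θ).exp).congr_deriv (by ring)
  · obtain ⟨-, hf_le, hf'_le⟩ := ht.1 σ
    obtain ⟨-, hf''_le⟩ := ht.2 σ
    have hf'_sq : |f' t σ ^ 2| ≤ M ^ 2 :=
      (abs_pow _ 2).trans_le (pow_le_pow_left₀ (abs_nonneg _) hf'_le 2)
    refine (abs_add_le _ _).trans (add_le_add (abs_mul_exp_mul_le hf''_le hf_le) ?_)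
    rw [abs_mul]
    exact mul_le_mul_of_nonneg_left (abs_mul_exp_mul_le hf'_sq hf_le) (abs_nonneg θ)

variable [NeZero μ]

lemma hasDerivAt_entropicRisk (hθ : θ ≠ 0)
    (hf_meas : ∀ᶠ t in 𝓝 t₀, AEStronglyMeasurable (f t) μ)
    (hf'_meas : AEStronglyMeasurable (f' t₀) μ)
    (hf : ∀ᶠ t in 𝓝 t₀, ∀ σ, HasDerivAt (f · σ) (f' t σ) t ∧ |f t σ| ≤ M ∧ |f' t σ| ≤ M) :
    HasDerivAt (fun t => entropicRisk μ θ (f t))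
      (∫ σ, f' t₀ σ ∂μ.tilted (θ * f t₀ ·)) t₀ := by
  have hZ := integral_exp_pos (integrable_exp_mul (θ := θ) hf_meas.self_of_nhds
    fun σ => (hf.self_of_nhds σ).2.1)
  refine (((hasDerivAt_integral_exp_mul hf_meas hf'_meas hf).log hZ.ne').const_mul
    (1 / θ)).congr_deriv ?_
  rw [integral_tilted_eq_div]
  field_simp

lemma hasDerivAt_deriv_entropicRisk (hθ : θ ≠ 0)
    (hf_meas : ∀ᶠ t in 𝓝 t₀, AEStronglyMeasurable (f t) μ)
    (hf'_meas : ∀ᶠ t in 𝓝 t₀, AEStronglyMeasurable (f' t) μ)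
    (hf''_meas : AEStronglyMeasurable (f'' t₀) μ)
    (hf : ∀ᶠ t in 𝓝 t₀, ∀ σ, HasDerivAt (f · σ) (f' t σ) t ∧ |f t σ| ≤ M ∧ |f' t σ| ≤ M)
    (hf' : ∀ᶠ t in 𝓝 t₀, ∀ σ, HasDerivAt (f' · σ) (f'' t σ) t ∧ |f'' t σ| ≤ M) :
    HasDerivAt (deriv fun t => entropicRisk μ θ (f t))
      (∫ σ, f'' t₀ σ ∂μ.tilted (θ * f t₀ ·) + θ * (∫ σ, f' t₀ σ ^ 2 ∂μ.tilted (θ * f t₀ ·) -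
        (∫ σ, f' t₀ σ ∂μ.tilted (θ * f t₀ ·)) ^ 2)) t₀ := by
  have h_deriv : (deriv fun t => entropicRisk μ θ (f t)) =ᶠ[𝓝 t₀] fun t =>
      (∫ σ, f' t σ * Real.exp (θ * f t σ) ∂μ) / ∫ σ, Real.exp (θ * f t σ) ∂μ :=
    (hf_meas.eventually_nhds.and (hf'_meas.and hf.eventually_nhds)).mono fun t ht => by
      rw [(hasDerivAt_entropicRisk hθ ht.1 ht.2.1 ht.2.2).deriv, integral_tilted_eq_div]
  have hZ := integral_exp_pos (integrable_exp_mul (θ := θ) hf_meas.self_of_nhds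
    fun σ => (hf.self_of_nhds σ).2.1)
  refine (((hasDerivAt_integral_mul_exp_mul hf_meas hf'_meas hf''_meas hf hf').div
    (hasDerivAt_integral_exp_mul hf_meas hf'_meas.self_of_nhds hf) hZ.ne').congr_of_eventuallyEq
    h_deriv).congr_deriv ?_
  simp only [integral_tilted_eq_div]
  field_simp
  ring

end TiltedCalculus

section TrackingCost

variable {E F : Type*} [NormedAddCommGroup E] [NormedSpace ℝ E] [NormedAddCommGroup F]
  [InnerProductSpace ℝ F] (C : E →L[ℝ] F) (x d g : E) (t : ℝ)

lemma abs_two_mul_inner_le {u v : F} {K : ℝ} (hu : ‖u‖ ≤ K) (hv : ‖v‖ ≤ K) :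
    |2 * ⟪u, v⟫| ≤ 2 * K ^ 2 := by
  rw [abs_mul, abs_two, sq]
  gcongr
  exact (abs_real_inner_le_norm u v).trans
    (mul_le_mul hu hv (norm_nonneg v) ((norm_nonneg u).trans hu))

lemma hasDerivAt_apply_add_smul_sub : HasDerivAt (fun t : ℝ => C (x + t • d - g)) (C d) t := by
  have h := C.hasFDerivAt.comp_hasDerivAt t
    ((((hasDerivAt_id t).smul_const d).const_add x).sub_const g)
  rw [one_smul] at h
  exact h

lemma hasDerivAt_norm_sq_apply_add_smul_sub :
    HasDerivAt (fun t : ℝ => ‖C (x + t • d - g)‖ ^ 2) (2 * ⟪C (x + t • d - g), C d⟫) t :=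
  (hasDerivAt_apply_add_smul_sub C x d g t).norm_sq

lemma hasDerivAt_two_mul_inner_apply_add_smul_sub :
    HasDerivAt (fun t : ℝ => 2 * ⟪C (x + t • d - g), C d⟫) (2 * ⟪C d, C d⟫) t := by
  simpa using ((hasDerivAt_apply_add_smul_sub C x d g t).inner ℝ
    (hasDerivAt_const t (C d))).const_mul 2

lemma norm_apply_add_smul_sub_le {a b : ℝ} (hx : ‖x‖ ≤ a) (hd : ‖d‖ ≤ b) (ht : |t| ≤ 1) :
    ‖C (x + t • d - g)‖ ≤ ‖C‖ * (a + b + ‖g‖) := by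
  refine (C.le_opNorm _).trans (mul_le_mul_of_nonneg_left ?_ (norm_nonneg C))
  calc ‖x + t • d - g‖ ≤ ‖x‖ + |t| * ‖d‖ + ‖g‖ := by
        simpa [norm_smul] using norm_sub_le_of_le (norm_add_le x (t • d)) le_rfl
    _ ≤ a + b + ‖g‖ := by
        gcongr
        nlinarith [norm_nonneg d, abs_nonneg t]

lemma eventually_norm_apply_add_smul_sub_le {Ω : Type*} {y δ : Ω → E} {My Mδ : ℝ}
    (hMy : ∀ σ, ‖y σ‖ ≤ My) (hMδ : ∀ σ, ‖δ σ‖ ≤ Mδ) :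
    ∀ᶠ t in 𝓝 (0 : ℝ), ∀ σ, ‖C (y σ + t • δ σ - g)‖ ≤ ‖C‖ * (My + Mδ + ‖g‖) ∧
      ‖C (δ σ)‖ ≤ ‖C‖ * (My + Mδ + ‖g‖) := by
  filter_upwards [Metric.closedBall_mem_nhds (0 : ℝ) one_pos] with t ht σ
  refine ⟨norm_apply_add_smul_sub_le C _ _ g t (hMy σ) (hMδ σ) (by simpa using ht), ?_⟩
  refine (C.le_opNorm _).trans (mul_le_mul_of_nonneg_left ?_ (norm_nonneg C))
  linarith [hMδ σ, (norm_nonneg (y σ)).trans (hMy σ), norm_nonneg g]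

end TrackingCost

theorem entropic_risk_tracking_second_derivative_general
    {H : Type*} [NormedAddCommGroup H] [InnerProductSpace ℝ H]
    [CompleteSpace H]
    (C : H →L[ℝ] H)
    {Ω : Type*} [MeasurableSpace Ω] (μ : Measure Ω) [IsProbabilityMeasure μ]
    (θ : ℝ) (hθ : 0 < θ) (g : H) (y δ : Ω → H)
    (hy : StronglyMeasurable y) (hδ : StronglyMeasurable δ)
    (My : ℝ) (hMy : ∀ σ, ‖y σ‖ ≤ My) (Mδ : ℝ) (hMδ : ∀ σ, ‖δ σ‖ ≤ Mδ) :
    DifferentiableAt ℝ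
      (fun t : ℝ =>
        (1 / θ) * Real.log (∫ σ, Real.exp (θ * ‖C (y σ + t • δ σ - g)‖ ^ 2) ∂μ)) 0 ∧
    HasDerivAt
      (deriv (fun t : ℝ =>
        (1 / θ) * Real.log (∫ σ, Real.exp (θ * ‖C (y σ + t • δ σ - g)‖ ^ 2) ∂μ)))
      (2 * (∫ σ, (Real.exp (θ * ‖C (y σ - g)‖ ^ 2) /
              ∫ τ, Real.exp (θ * ‖C (y τ - g)‖ ^ 2) ∂μ) *
              ⟪(ContinuousLinearMap.adjoint C) (C (δ σ)), δ σ⟫ ∂μ)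
        + 4 * θ *
          ((∫ σ, (Real.exp (θ * ‖C (y σ - g)‖ ^ 2) /
                ∫ τ, Real.exp (θ * ‖C (y τ - g)‖ ^ 2) ∂μ) *
                ⟪(ContinuousLinearMap.adjoint C) (C (y σ - g)), δ σ⟫ ^ 2 ∂μ)
            - (∫ σ, (Real.exp (θ * ‖C (y σ - g)‖ ^ 2) /
                ∫ τ, Real.exp (θ * ‖C (y τ - g)‖ ^ 2) ∂μ) *
                ⟪(ContinuousLinearMap.adjoint C) (C (y σ - g)), δ σ⟫ ∂μ) ^ 2))
      0 := by
  set K := ‖C‖ * (My + Mδ + ‖g‖)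
  have h_meas (t : ℝ) : StronglyMeasurable fun σ => C (y σ + t • δ σ - g) :=
    C.continuous.comp_stronglyMeasurable ((hy.add (hδ.const_smul t)).sub stronglyMeasurable_const)
  have hCδ_meas : StronglyMeasurable fun σ => C (δ σ) := C.continuous.comp_stronglyMeasurable hδ
  have h_le := eventually_norm_apply_add_smul_sub_le C g hMy hMδ
  have hf : ∀ᶠ t in 𝓝 (0 : ℝ), ∀ σ,
      HasDerivAt (fun t => ‖C (y σ + t • δ σ - g)‖ ^ 2) (2 * ⟪C (y σ + t • δ σ - g), C (δ σ)⟫) t ∧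
        |‖C (y σ + t • δ σ - g)‖ ^ 2| ≤ 2 * K ^ 2 ∧
        |2 * ⟪C (y σ + t • δ σ - g), C (δ σ)⟫| ≤ 2 * K ^ 2 := h_le.mono fun t ht σ =>
    ⟨hasDerivAt_norm_sq_apply_add_smul_sub C (y σ) (δ σ) g t,
      (abs_of_nonneg (by positivity)).trans_le
        ((pow_le_pow_left₀ (norm_nonneg _) (ht σ).1 2).trans (by nlinarith [sq_nonneg K])),
      abs_two_mul_inner_le (ht σ).1 (ht σ).2⟩
  have hf' : ∀ᶠ t in 𝓝 (0 : ℝ), ∀ σ,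
      HasDerivAt (fun t => 2 * ⟪C (y σ + t • δ σ - g), C (δ σ)⟫) (2 * ⟪C (δ σ), C (δ σ)⟫) t ∧
        |2 * ⟪C (δ σ), C (δ σ)⟫| ≤ 2 * K ^ 2 := h_le.mono fun t ht σ =>
    ⟨hasDerivAt_two_mul_inner_apply_add_smul_sub C (y σ) (δ σ) g t,
      abs_two_mul_inner_le (ht σ).2 (ht σ).2⟩
  have hf_meas : ∀ᶠ t in 𝓝 (0 : ℝ),
      AEStronglyMeasurable (fun σ => ‖C (y σ + t • δ σ - g)‖ ^ 2) μ :=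
    .of_forall fun t => ((h_meas t).norm.pow 2).aestronglyMeasurable
  have hf'_meas : ∀ᶠ t in 𝓝 (0 : ℝ),
      AEStronglyMeasurable (fun σ => 2 * ⟪C (y σ + t • δ σ - g), C (δ σ)⟫) μ :=
    .of_forall fun t => (((h_meas t).inner hCδ_meas).const_mul 2).aestronglyMeasurable
  refine ⟨(hasDerivAt_entropicRisk hθ.ne' hf_meas hf'_meas.self_of_nhds hf).differentiableAt,
    (hasDerivAt_deriv_entropicRisk hθ.ne' hf_meas hf'_meas
      ((hCδ_meas.inner hCδ_meas).const_mul (2 : ℝ)).aestronglyMeasurable hf hf').congr_deriv ?_⟩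
  simp only [zero_smul, add_zero, mul_pow, integral_const_mul, integral_tilted, smul_eq_mul,
    ContinuousLinearMap.adjoint_inner_left]
  ring

/-- Second derivative of the entropic risk of a quadratic tracking cost:
the map `t ↦ R_θ(‖C(y + tδ - g)‖²)` is twice differentiable at `t = 0`,
and its second derivative is the tilted expectation of `⟪C*Cδ, δ⟫` plus
`2θ` times the tilted variance of `⟪C*C(y-g), δ⟫` (times factors 2 and 4θ). -/
theorem entropic_risk_tracking_second_derivative
    {H : Type*} [NormedAddCommGroup H] [InnerProductSpace ℝ H]
    [CompleteSpace H] [SecondCountableTopology H]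
    (C : H →L[ℝ] H)
    {Ω : Type*} [MeasurableSpace Ω] (μ : Measure Ω) [IsProbabilityMeasure μ]
    (θ : ℝ) (hθ : 0 < θ) (g : H) (y δ : Ω → H)
    (hy : StronglyMeasurable y) (hδ : StronglyMeasurable δ)
    (My : ℝ) (hMy : ∀ σ, ‖y σ‖ ≤ My) (Mδ : ℝ) (hMδ : ∀ σ, ‖δ σ‖ ≤ Mδ) :
    DifferentiableAt ℝ
      (fun t : ℝ =>
        (1 / θ) * Real.log (∫ σ, Real.exp (θ * ‖C (y σ + t • δ σ - g)‖ ^ 2) ∂μ)) 0 ∧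
    HasDerivAt
      (deriv (fun t : ℝ =>
        (1 / θ) * Real.log (∫ σ, Real.exp (θ * ‖C (y σ + t • δ σ - g)‖ ^ 2) ∂μ)))
      (2 * (∫ σ, (Real.exp (θ * ‖C (y σ - g)‖ ^ 2) /
              ∫ τ, Real.exp (θ * ‖C (y τ - g)‖ ^ 2) ∂μ) *
              ⟪(ContinuousLinearMap.adjoint C) (C (δ σ)), δ σ⟫ ∂μ)
        + 4 * θ *
          ((∫ σ, (Real.exp (θ * ‖C (y σ - g)‖ ^ 2) /
                ∫ τ, Real.exp (θ * ‖C (y τ - g)‖ ^ 2) ∂μ) *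
                ⟪(ContinuousLinearMap.adjoint C) (C (y σ - g)), δ σ⟫ ^ 2 ∂μ)
            - (∫ σ, (Real.exp (θ * ‖C (y σ - g)‖ ^ 2) /
                ∫ τ, Real.exp (θ * ‖C (y τ - g)‖ ^ 2) ∂μ) *
                ⟪(ContinuousLinearMap.adjoint C) (C (y σ - g)), δ σ⟫ ∂μ) ^ 2))
      0 :=
  entropic_risk_tracking_second_derivative_general C μ θ hθ g y δ hy hδ My hMy Mδ hMδ
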